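/- The inverse Lax curve φ_r is strictly increasing on (0,∞): for all 0 < h₁ < h₂ one has φ_r(h₁) < φ_r(h₂). -/

import Mathlib

/-!
On the rarefaction branch `φ_r` is `√h` up to an affine change, and both branches take the value
`v_r` at `h = h_r`, so it suffices to show the shock branch is strictly increasing on `[h_r, ∞)`.
There `(h - h_r) √(g (h + h_r) / (2 h h_r))` is a product of an increasing and a decreasing factor,
but it equals `√(g / (2 h_r) · (h - h_r) (h - h_r² / h))`, and both factors under the root are
nonnegative and strictly increasing.
-/

/-- Inverse Lax curve through the right state `(hr, vr)`. -/
noncomputable def phir (g hr vr h : ℝ) : ℝ :=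
  if h ≤ hr then vr - 2 * Real.sqrt (g * hr) + 2 * Real.sqrt (g * h)
  else vr + (h - hr) * Real.sqrt (g * (h + hr) / (2 * h * hr))

/-- Discharge-form inverse Lax curve through the right state. -/
noncomputable def phirTilde (g hr vr h : ℝ) : ℝ := h * phir g hr vr h

open Set Real

section LaxCurve

variable {g hr : ℝ}

lemma strictMonoOn_sub_mul_sub_sq_div (hhr : 0 < hr) :
    StrictMonoOn (fun h => (h - hr) * (h - hr ^ 2 / h)) (Ici hr) := by
  intro a (ha : hr ≤ a) b _ hab
  have ha0 : 0 < a := hhr.trans_le ha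
  have hdiv : hr ^ 2 / b < hr ^ 2 / a := div_lt_div_of_pos_left (by positivity) ha0 hab
  have hnonneg : 0 ≤ a - hr ^ 2 / a := by
    rw [sub_nonneg, div_le_iff₀ ha0, sq]
    exact mul_self_le_mul_self hhr.le ha
  exact mul_lt_mul'' (by linarith) (by linarith) (by linarith) hnonneg

lemma sub_mul_sqrt_eq_sqrt {h : ℝ} (hhr : 0 < hr) (hh : hr ≤ h) :
    (h - hr) * √(g * (h + hr) / (2 * h * hr)) =
      √(g / (2 * hr) * ((h - hr) * (h - hr ^ 2 / h))) := by
  have hh0 : h ≠ 0 := (hhr.trans_le hh).ne'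
  calc (h - hr) * √(g * (h + hr) / (2 * h * hr))
      = √((h - hr) ^ 2 * (g * (h + hr) / (2 * h * hr))) := by
        rw [sqrt_mul (sq_nonneg _), sqrt_sq (sub_nonneg.mpr hh)]
    _ = √(g / (2 * hr) * ((h - hr) * (h - hr ^ 2 / h))) := by
        congr 1
        field_simp
        ring

lemma strictMonoOn_shock (hg : 0 < g) (hhr : 0 < hr) :
    StrictMonoOn (fun h => (h - hr) * √(g * (h + hr) / (2 * h * hr))) (Ici hr) := by
  have hc : 0 < g / (2 * hr) := by positivity
  have hpoly := strictMonoOn_sub_mul_sub_sq_div hhr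
  intro a ha b hb hab
  simp only [sub_mul_sqrt_eq_sqrt hhr ha, sub_mul_sqrt_eq_sqrt hhr hb]
  have hnonneg : 0 ≤ (a - hr) * (a - hr ^ 2 / a) := by
    simpa using hpoly.monotoneOn (mem_Ici.2 le_rfl) ha ha
  exact sqrt_lt_sqrt (mul_nonneg hc.le hnonneg) (mul_lt_mul_of_pos_left (hpoly ha hb hab) hc)

variable {vr : ℝ}

lemma strictMonoOn_phir_Ioc (hg : 0 < g) : StrictMonoOn (phir g hr vr) (Ioc 0 hr) := by
  intro a ha b hb hab
  have hsqrt : √(g * a) < √(g * b) :=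
    sqrt_lt_sqrt (mul_nonneg hg.le ha.1.le) (mul_lt_mul_of_pos_left hab hg)
  rw [phir, phir, if_pos ha.2, if_pos hb.2]
  linarith

lemma phir_eqOn_Ici :
    EqOn (phir g hr vr) (fun h => vr + (h - hr) * √(g * (h + hr) / (2 * h * hr))) (Ici hr) := by
  intro h hh
  rcases (mem_Ici.mp hh).eq_or_lt with rfl | hlt
  · simp [phir]
  · exact if_neg hlt.not_ge

lemma strictMonoOn_phir_Ici (hg : 0 < g) (hhr : 0 < hr) :
    StrictMonoOn (phir g hr vr) (Ici hr) := by
  refine StrictMonoOn.congr (fun a ha b hb hab => ?_) phir_eqOn_Ici.symm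
  simpa using strictMonoOn_shock hg hhr ha hb hab

end LaxCurve

/-- The inverse Lax curve `φ_r` is strictly increasing on `(0, ∞)`. -/
theorem phir_strictMono (g hr vr : ℝ) (hg : 0 < g) (hhr : 0 < hr) :
    ∀ h₁ h₂ : ℝ, 0 < h₁ → h₁ < h₂ → phir g hr vr h₁ < phir g hr vr h₂ := by
  have hmono : StrictMonoOn (phir g hr vr) (Ioc 0 hr ∪ Ici hr) :=
    (strictMonoOn_phir_Ioc hg).union (strictMonoOn_phir_Ici hg hhr)
      ⟨right_mem_Ioc.mpr hhr, fun _ hh => hh.2⟩ isLeast_Ici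
  rw [Ioc_union_Ici_eq_Ioi hhr] at hmono
  exact fun h₁ h₂ hh₁ hlt => hmono hh₁ (hh₁.trans hlt) hlt
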